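/- arXiv:dg-ga/9603014 — 4 statements merged into one kernel-verified Lean document; each statement's English description precedes it below -/
import Mathlib

section
/- Let V and W be real inner product spaces and B : V × V → W a symmetric bilinear map with ‖B(u,u)‖ = c‖u‖² for all u (c ≥ 0 constant). For orthonormal u, v ∈ V define K(u,v) = ⟨B(u,u), B(v,v)⟩ − ‖B(u,v)‖². Then K(u,v) = (3/2)⟨B(u,u), B(v,v)⟩ − (1/2)c². -/
/-!
Polarizing the isotropy condition `‖B x x‖ = c ‖x‖²` at `x = u ± v` and adding the two
identities (parallelogram law in `W`) gives, for all `u v`,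
`2 ‖B u v‖² + ⟪B u u, B v v⟫ = c² (‖u‖² ‖v‖² + 2 ⟪u, v⟫²)`.
For orthonormal `u, v` this reads `‖B u v‖² = (c² - ⟪B u u, B v v⟫) / 2`.
-/

open scoped RealInnerProductSpace

section SymmetricBilinear

variable {V W : Type*} [AddCommGroup V] [Module ℝ V] [AddCommGroup W] [Module ℝ W]
  (B : V →ₗ[ℝ] V →ₗ[ℝ] W)

theorem bilin_diag_add (hsymm : ∀ u v : V, B u v = B v u) (x y : V) :
    B (x + y) (x + y) = B x x + B y y + (2 : ℝ) • B x y := by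
  simp only [map_add, LinearMap.add_apply, hsymm y x, two_smul]
  abel

theorem bilin_diag_sub (hsymm : ∀ u v : V, B u v = B v u) (x y : V) :
    B (x - y) (x - y) = B x x + B y y - (2 : ℝ) • B x y := by
  simp only [map_sub, LinearMap.sub_apply, hsymm y x, two_smul]
  abel

end SymmetricBilinear

theorem two_mul_norm_sq_add_inner_diag_of_norm_diag {V W : Type*}
    [NormedAddCommGroup V] [InnerProductSpace ℝ V] [NormedAddCommGroup W] [InnerProductSpace ℝ W]
    (B : V →ₗ[ℝ] V →ₗ[ℝ] W) (hsymm : ∀ u v : V, B u v = B v u)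
    (c : ℝ) (hB : ∀ u : V, ‖B u u‖ = c * ‖u‖ ^ 2) (u v : V) :
    2 * ‖B u v‖ ^ 2 + ⟪B u u, B v v⟫ = c ^ 2 * (‖u‖ ^ 2 * ‖v‖ ^ 2 + 2 * ⟪u, v⟫ ^ 2) := by
  have parallelogram := parallelogram_law_with_norm ℝ (B u u + B v v) ((2 : ℝ) • B u v)
  rw [← bilin_diag_add B hsymm, ← bilin_diag_sub B hsymm, hB, hB, norm_add_sq_real,
    norm_sub_sq_real, norm_add_sq_real, norm_smul, hB, hB] at parallelogram
  simp only [Real.norm_ofNat] at parallelogram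
  linear_combination -parallelogram / 4

theorem stmt_1_general {V W : Type*} [NormedAddCommGroup V] [InnerProductSpace ℝ V]
    [NormedAddCommGroup W] [InnerProductSpace ℝ W]
    (B : V →ₗ[ℝ] V →ₗ[ℝ] W) (hsymm : ∀ u v : V, B u v = B v u)
    (c : ℝ) (hB : ∀ u : V, ‖B u u‖ = c * ‖u‖ ^ 2)
    (u v : V) (hu : ‖u‖ = 1) (hv : ‖v‖ = 1) (huv : ⟪u, v⟫ = 0) :
    ⟪B u u, B v v⟫ - ‖B u v‖ ^ 2 =
      (3 / 2) * ⟪B u u, B v v⟫ - (1 / 2) * c ^ 2 := by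
  have key := two_mul_norm_sq_add_inner_diag_of_norm_diag B hsymm c hB u v
  rw [hu, hv, huv] at key
  linarith

theorem stmt_1 {V W : Type*} [NormedAddCommGroup V] [InnerProductSpace ℝ V]
    [NormedAddCommGroup W] [InnerProductSpace ℝ W]
    (B : V →ₗ[ℝ] V →ₗ[ℝ] W) (hsymm : ∀ u v : V, B u v = B v u)
    (c : ℝ) (hc : 0 ≤ c) (hB : ∀ u : V, ‖B u u‖ = c * ‖u‖ ^ 2)
    (u v : V) (hu : ‖u‖ = 1) (hv : ‖v‖ = 1) (huv : ⟪u, v⟫ = 0) :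
    ⟪B u u, B v v⟫ - ‖B u v‖ ^ 2 =
      (3 / 2) * ⟪B u u, B v v⟫ - (1 / 2) * c ^ 2 :=
  stmt_1_general B hsymm c hB u v hu hv huv
end

section
/- Let V and W be real inner product spaces and B : V × V → W a symmetric bilinear map with ‖B(u,u)‖ = c‖u‖² for all u (c ≥ 0). For orthonormal u, v ∈ V, the quantity K(u,v) = ⟨B(u,u), B(v,v)⟩ − ‖B(u,v)‖² satisfies −2c² ≤ K(u,v) ≤ c². -/
/-!
Polarization: since `B` is symmetric, `B (u ± v) (u ± v) = B u u + B v v ± 2 B u v`, and both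
sides have norm `c ‖u ± v‖² = 2c`. The parallelogram law then gives
`2 ‖B u v‖² = c² - ⟪B u u, B v v⟫`, so `K = (3/2) ⟪B u u, B v v⟫ - c²/2`, and Cauchy–Schwarz
bounds `⟪B u u, B v v⟫` between `-c²` and `c²`.
-/

open scoped RealInnerProductSpace

section Polarization

variable {R M N : Type*} [CommRing R] [AddCommGroup M] [Module R M] [AddCommGroup N] [Module R N]
  (B : M →ₗ[R] M →ₗ[R] N) (hsymm : ∀ u v : M, B u v = B v u)

include hsymm

theorem LinearMap.apply_add_add_of_symm (u v : M) :
    B (u + v) (u + v) = B u u + B v v + (2 : R) • B u v := by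
  simp only [map_add, LinearMap.add_apply, hsymm v u]
  module

theorem LinearMap.apply_sub_sub_of_symm (u v : M) :
    B (u - v) (u - v) = B u u + B v v - (2 : R) • B u v := by
  simp only [map_sub, LinearMap.sub_apply, hsymm v u]
  module

end Polarization

section Orthonormal

variable {V W : Type*} [NormedAddCommGroup V] [InnerProductSpace ℝ V]
  [NormedAddCommGroup W] [InnerProductSpace ℝ W]

theorem norm_add_sq_of_orthonormal_pair {u v : V} (hu : ‖u‖ = 1) (hv : ‖v‖ = 1)
    (huv : ⟪u, v⟫ = 0) : ‖u + v‖ ^ 2 = 2 := by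
  rw [norm_add_sq_real, hu, hv, huv]; ring

theorem norm_sub_sq_of_orthonormal_pair {u v : V} (hu : ‖u‖ = 1) (hv : ‖v‖ = 1)
    (huv : ⟪u, v⟫ = 0) : ‖u - v‖ ^ 2 = 2 := by
  rw [norm_sub_sq_real, hu, hv, huv]; ring

theorem two_mul_norm_sq_apply_of_orthonormal (B : V →ₗ[ℝ] V →ₗ[ℝ] W)
    (hsymm : ∀ u v : V, B u v = B v u) {c : ℝ} (hB : ∀ u : V, ‖B u u‖ = c * ‖u‖ ^ 2)
    {u v : V} (hu : ‖u‖ = 1) (hv : ‖v‖ = 1) (huv : ⟪u, v⟫ = 0) :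
    2 * ‖B u v‖ ^ 2 = c ^ 2 - ⟪B u u, B v v⟫ := by
  have hadd : ‖B u u + B v v + (2 : ℝ) • B u v‖ = 2 * c := by
    rw [← B.apply_add_add_of_symm hsymm, hB, norm_add_sq_of_orthonormal_pair hu hv huv, mul_comm]
  have hsub : ‖B u u + B v v - (2 : ℝ) • B u v‖ = 2 * c := by
    rw [← B.apply_sub_sub_of_symm hsymm, hB, norm_sub_sq_of_orthonormal_pair hu hv huv, mul_comm]
  have hpar := parallelogram_law_with_norm ℝ (B u u + B v v) ((2 : ℝ) • B u v)
  rw [hadd, hsub, norm_add_sq_real, hB u, hB v, hu, hv, norm_smul, Real.norm_two] at hpar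
  linarith

end Orthonormal

theorem stmt_2_general {V W : Type*} [NormedAddCommGroup V] [InnerProductSpace ℝ V]
    [NormedAddCommGroup W] [InnerProductSpace ℝ W]
    (B : V →ₗ[ℝ] V →ₗ[ℝ] W) (hsymm : ∀ u v : V, B u v = B v u)
    (c : ℝ) (hB : ∀ u : V, ‖B u u‖ = c * ‖u‖ ^ 2)
    (u v : V) (hu : ‖u‖ = 1) (hv : ‖v‖ = 1) (huv : ⟪u, v⟫ = 0) :
    -2 * c ^ 2 ≤ ⟪B u u, B v v⟫ - ‖B u v‖ ^ 2 ∧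
      ⟪B u u, B v v⟫ - ‖B u v‖ ^ 2 ≤ c ^ 2 := by
  have hK := two_mul_norm_sq_apply_of_orthonormal B hsymm hB hu hv huv
  have hcs : |⟪B u u, B v v⟫| ≤ c ^ 2 := by
    calc |⟪B u u, B v v⟫| ≤ ‖B u u‖ * ‖B v v‖ := abs_real_inner_le_norm _ _
      _ = c ^ 2 := by rw [hB, hB, hu, hv]; ring
  rw [abs_le] at hcs
  constructor <;> linarith

theorem stmt_2 {V W : Type*} [NormedAddCommGroup V] [InnerProductSpace ℝ V]
    [NormedAddCommGroup W] [InnerProductSpace ℝ W]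
    (B : V →ₗ[ℝ] V →ₗ[ℝ] W) (hsymm : ∀ u v : V, B u v = B v u)
    (c : ℝ) (hc : 0 ≤ c) (hB : ∀ u : V, ‖B u u‖ = c * ‖u‖ ^ 2)
    (u v : V) (hu : ‖u‖ = 1) (hv : ‖v‖ = 1) (huv : ⟪u, v⟫ = 0) :
    -2 * c ^ 2 ≤ ⟪B u u, B v v⟫ - ‖B u v‖ ^ 2 ∧
      ⟪B u u, B v v⟫ - ‖B u v‖ ^ 2 ≤ c ^ 2 :=
  stmt_2_general B hsymm c hB u v hu hv huv
end

section
/- With the hypotheses above (B symmetric bilinear, ‖B(u,u)‖ = c‖u‖² for all u, u and v orthonormal), equality K(u,v) = −2c² holds if and only if B(u,u) = −B(v,v), and equality K(u,v) = c² holds if and only if B(u,u) = B(v,v). -/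
/-! With `a = B u u`, `b = B v v`, `m = B u v`, the vectors `B (u ± v) (u ± v) = (a + b) ± 2m`
both have norm `2c`, so the parallelogram law gives `⟪a, b⟫ + 2‖m‖² = c²`. Hence
`K(u, v) = (3⟪a, b⟫ - c²) / 2`, and the two equality cases are `⟪a, b⟫ = ∓c²`, which for vectors
of norm `c` means `a = ∓b`. -/

open scoped RealInnerProductSpace

section

variable {V W : Type*} [NormedAddCommGroup V] [InnerProductSpace ℝ V]
  [NormedAddCommGroup W] [InnerProductSpace ℝ W]

theorem real_inner_eq_sq_iff_eq_of_norm_eq {x y : W} {r : ℝ} (hx : ‖x‖ = r) (hy : ‖y‖ = r) :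
    ⟪x, y⟫ = r ^ 2 ↔ x = y := by
  rw [← sub_eq_zero (a := x), ← norm_eq_zero, ← sq_eq_zero_iff, norm_sub_sq_real, hx, hy]
  constructor <;> intro h <;> linarith

theorem real_inner_eq_neg_sq_iff_eq_neg_of_norm_eq {x y : W} {r : ℝ} (hx : ‖x‖ = r)
    (hy : ‖y‖ = r) : ⟪x, y⟫ = -r ^ 2 ↔ x = -y := by
  rw [← real_inner_eq_sq_iff_eq_of_norm_eq hx (by rwa [norm_neg] : ‖-y‖ = r), inner_neg_right,
    neg_eq_iff_eq_neg]

theorem apply_add_apply_add_eq_of_symm (B : V →ₗ[ℝ] V →ₗ[ℝ] W) (hsymm : ∀ u v : V, B u v = B v u)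
    (u v : V) : B (u + v) (u + v) = (B u u + B v v) + (2 : ℝ) • B u v := by
  simp only [map_add, LinearMap.add_apply, hsymm v u, two_smul]
  abel

theorem apply_sub_apply_sub_eq_of_symm (B : V →ₗ[ℝ] V →ₗ[ℝ] W) (hsymm : ∀ u v : V, B u v = B v u)
    (u v : V) : B (u - v) (u - v) = (B u u + B v v) - (2 : ℝ) • B u v := by
  simp only [map_sub, LinearMap.sub_apply, hsymm v u, two_smul]
  abel

theorem inner_apply_self_add_two_mul_norm_sq_of_inner_eq_zero (B : V →ₗ[ℝ] V →ₗ[ℝ] W)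
    (hsymm : ∀ u v : V, B u v = B v u) (c : ℝ) (hB : ∀ u : V, ‖B u u‖ = c * ‖u‖ ^ 2)
    {u v : V} (huv : ⟪u, v⟫ = 0) :
    ⟪B u u, B v v⟫ + 2 * ‖B u v‖ ^ 2 = c ^ 2 * ‖u‖ ^ 2 * ‖v‖ ^ 2 := by
  have hadd := hB (u + v)
  have hsub := hB (u - v)
  rw [apply_add_apply_add_eq_of_symm B hsymm, norm_add_sq_real, huv] at hadd
  rw [apply_sub_apply_sub_eq_of_symm B hsymm, norm_sub_sq_real, huv] at hsub
  have hpar := parallelogram_law_with_norm ℝ (B u u + B v v) ((2 : ℝ) • B u v)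
  simp only [hadd, hsub, norm_smul, norm_add_sq_real, hB u, hB v, Real.norm_two] at hpar
  linear_combination -hpar / 4

end

theorem stmt_3_general {V W : Type*} [NormedAddCommGroup V] [InnerProductSpace ℝ V]
    [NormedAddCommGroup W] [InnerProductSpace ℝ W]
    (B : V →ₗ[ℝ] V →ₗ[ℝ] W) (hsymm : ∀ u v : V, B u v = B v u)
    (c : ℝ) (hB : ∀ u : V, ‖B u u‖ = c * ‖u‖ ^ 2)
    (u v : V) (hu : ‖u‖ = 1) (hv : ‖v‖ = 1) (huv : ⟪u, v⟫ = 0) :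
    (⟪B u u, B v v⟫ - ‖B u v‖ ^ 2 = -2 * c ^ 2 ↔ B u u = -B v v) ∧
      (⟪B u u, B v v⟫ - ‖B u v‖ ^ 2 = c ^ 2 ↔ B u u = B v v) := by
  have hKey := inner_apply_self_add_two_mul_norm_sq_of_inner_eq_zero B hsymm c hB huv
  have hBu : ‖B u u‖ = c := by simpa [hu] using hB u
  have hBv : ‖B v v‖ = c := by simpa [hv] using hB v
  rw [hu, hv] at hKey
  rw [← real_inner_eq_neg_sq_iff_eq_neg_of_norm_eq hBu hBv,
    ← real_inner_eq_sq_iff_eq_of_norm_eq hBu hBv]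
  constructor <;> constructor <;> intro h <;> linarith

theorem stmt_3 {V W : Type*} [NormedAddCommGroup V] [InnerProductSpace ℝ V]
    [NormedAddCommGroup W] [InnerProductSpace ℝ W]
    (B : V →ₗ[ℝ] V →ₗ[ℝ] W) (hsymm : ∀ u v : V, B u v = B v u)
    (c : ℝ) (hc : 0 < c) (hB : ∀ u : V, ‖B u u‖ = c * ‖u‖ ^ 2)
    (u v : V) (hu : ‖u‖ = 1) (hv : ‖v‖ = 1) (huv : ⟪u, v⟫ = 0) :
    (⟪B u u, B v v⟫ - ‖B u v‖ ^ 2 = -2 * c ^ 2 ↔ B u u = -B v v) ∧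
      (⟪B u u, B v v⟫ - ‖B u v‖ ^ 2 = c ^ 2 ↔ B u u = B v v) :=
  stmt_3_general B hsymm c hB u v hu hv huv
end

section
/- Let V and W be real inner product spaces with dim W = 1, and let B : V × V → W be a symmetric bilinear map with ‖B(u,u)‖ = c‖u‖² for all u ∈ V (c ≥ 0). Then there is a unit vector e ∈ W and a sign ε ∈ {±1} such that B(u,v) = ε c ⟨u,v⟩ e for all u, v ∈ V; consequently, for orthonormal u, v, K(u,v) = ⟨B(u,u),B(v,v)⟩ − ‖B(u,v)‖² = c². -/
/-!
Fix a unit vector `e` spanning `W`; then `b u v = ⟪e, B u v⟫` is a symmetric real bilinear form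
whose quadratic form `q` satisfies `q² = (c‖·‖²)²`, i.e. `(q - c‖·‖²) (q + c‖·‖²) = 0` pointwise.
Restricted to a line `x + t • y`, each factor is a polynomial of degree at most two in `t`, and
since `ℝ[t]` is a domain one of the two factors vanishes identically. Hence `q = ±c‖·‖²`, and
polarization gives `b = ±c ⟪·, ·⟫`.
-/

open scoped RealInnerProductSpace

namespace QuadraticMap

open Polynomial

variable {R M : Type*} [CommRing R] [AddCommGroup M] [Module R M]

theorem map_add_smul (Q : QuadraticMap R M R) (x y : M) (t : R) :
    Q (x + t • y) = Q x + t * polar Q x y + t ^ 2 * Q y := by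
  have := polar_smul_right Q t x y
  rw [polar, QuadraticMap.map_smul, smul_eq_mul, smul_eq_mul] at this
  linear_combination this

noncomputable def linePoly (Q : QuadraticMap R M R) (x y : M) : R[X] :=
  C (Q x) + C (polar Q x y) * X + C (Q y) * X ^ 2

theorem eval_linePoly (Q : QuadraticMap R M R) (x y : M) (t : R) :
    (Q.linePoly x y).eval t = Q (x + t • y) := by
  simp only [linePoly, eval_add, eval_mul, eval_C, eval_X, eval_pow, map_add_smul]
  ring

theorem coeff_zero_linePoly (Q : QuadraticMap R M R) (x y : M) :
    (Q.linePoly x y).coeff 0 = Q x := by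
  simp [linePoly]

theorem coeff_two_linePoly (Q : QuadraticMap R M R) (x y : M) :
    (Q.linePoly x y).coeff 2 = Q y := by
  simp [linePoly]

theorem eq_zero_or_eq_zero_of_forall_mul_eq_zero [IsDomain R] [Infinite R]
    {Q₁ Q₂ : QuadraticMap R M R} (h : ∀ x, Q₁ x * Q₂ x = 0) : Q₁ = 0 ∨ Q₂ = 0 := by
  by_contra! hne
  obtain ⟨y, hy⟩ := DFunLike.ne_iff.mp hne.1
  obtain ⟨x, hx⟩ := DFunLike.ne_iff.mp hne.2
  have h₁ : Q₁.linePoly x y ≠ 0 := fun h0 ↦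
    hy (by simpa [h0] using (Q₁.coeff_two_linePoly x y).symm)
  have h₂ : Q₂.linePoly x y ≠ 0 := fun h0 ↦
    hx (by simpa [h0] using (Q₂.coeff_zero_linePoly x y).symm)
  refine mul_ne_zero h₁ h₂ (Polynomial.funext fun t ↦ ?_)
  simp only [eval_mul, eval_linePoly, h, eval_zero]

theorem eq_or_eq_neg_of_forall_sq_eq_sq [IsDomain R] [Infinite R]
    {Q N : QuadraticMap R M R} (h : ∀ x, Q x ^ 2 = N x ^ 2) : Q = N ∨ Q = -N := by
  have := eq_zero_or_eq_zero_of_forall_mul_eq_zero (Q₁ := Q - N) (Q₂ := Q + N) fun x ↦ by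
    simp only [sub_apply, add_apply]
    linear_combination h x
  rwa [sub_eq_zero, add_eq_zero_iff_eq_neg] at this

end QuadraticMap

theorem LinearMap.BilinMap.eq_of_toQuadraticMap_eq {R M N : Type*} [CommRing R]
    [AddCommGroup M] [Module R M] [AddCommGroup N] [Module R N] [Invertible (2 : R)]
    {B₁ B₂ : LinearMap.BilinMap R M N} (h₁ : ∀ x y, B₁ x y = B₁ y x) (h₂ : ∀ x y, B₂ x y = B₂ y x)
    (h : B₁.toQuadraticMap = B₂.toQuadraticMap) : B₁ = B₂ := by
  rw [← QuadraticMap.associated_left_inverse R h₁, ← QuadraticMap.associated_left_inverse R h₂, h]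

theorem exists_norm_eq_one_forall_eq_inner_smul {𝕜 W : Type*} [RCLike 𝕜]
    [NormedAddCommGroup W] [InnerProductSpace 𝕜 W]
    (hW : Module.finrank 𝕜 W = 1) : ∃ e : W, ‖e‖ = 1 ∧ ∀ x, x = inner 𝕜 e x • e := by
  have : FiniteDimensional 𝕜 W := .of_finrank_eq_succ hW
  let b := (stdOrthonormalBasis 𝕜 W).reindex (finCongr hW)
  refine ⟨b 0, b.orthonormal.1 0, fun x ↦ ?_⟩
  simpa using (b.sum_repr' x).symm

theorem LinearMap.BilinForm.exists_eq_smul_innerₗ_of_sq_apply_self {V : Type*}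
    [NormedAddCommGroup V] [InnerProductSpace ℝ V] {b : LinearMap.BilinForm ℝ V}
    (hb : ∀ u v, b u v = b v u) {c : ℝ} (h : ∀ x, b x x ^ 2 = (c * ‖x‖ ^ 2) ^ 2) :
    ∃ ε : ℝ, (ε = 1 ∨ ε = -1) ∧ b = (ε * c) • innerₗ V := by
  have hsq (x : V) : LinearMap.BilinMap.toQuadraticMap b x ^ 2 =
      (c • LinearMap.BilinMap.toQuadraticMap (innerₗ V)) x ^ 2 := by
    simpa [real_inner_self_eq_norm_sq] using h x
  obtain ⟨ε, hε, hQ⟩ : ∃ ε : ℝ, (ε = 1 ∨ ε = -1) ∧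
      LinearMap.BilinMap.toQuadraticMap b =
        LinearMap.BilinMap.toQuadraticMap ((ε * c) • innerₗ V) := by
    rcases QuadraticMap.eq_or_eq_neg_of_forall_sq_eq_sq hsq with hQ | hQ
    · exact ⟨1, Or.inl rfl, by rw [hQ]; ext; simp⟩
    · exact ⟨-1, Or.inr rfl, by rw [hQ]; ext; simp⟩
  exact ⟨ε, hε,
    LinearMap.BilinMap.eq_of_toQuadraticMap_eq hb (fun u v ↦ by simp [real_inner_comm]) hQ⟩

theorem stmt_4_general {V W : Type*} [NormedAddCommGroup V] [InnerProductSpace ℝ V]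
    [NormedAddCommGroup W] [InnerProductSpace ℝ W]
    (hW : Module.finrank ℝ W = 1)
    (B : V →ₗ[ℝ] V →ₗ[ℝ] W) (hsymm : ∀ u v : V, B u v = B v u)
    (c : ℝ) (hB : ∀ u : V, ‖B u u‖ = c * ‖u‖ ^ 2) :
    (∃ (e : W) (ε : ℝ), ‖e‖ = 1 ∧ (ε = 1 ∨ ε = -1) ∧
      ∀ u v : V, B u v = (ε * c * ⟪u, v⟫) • e) ∧
    ∀ u v : V, ‖u‖ = 1 → ‖v‖ = 1 → ⟪u, v⟫ = 0 →
      ⟪B u u, B v v⟫ - ‖B u v‖ ^ 2 = c ^ 2 := by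
  obtain ⟨e, he, hrep⟩ := exists_norm_eq_one_forall_eq_inner_smul (𝕜 := ℝ) hW
  let b : LinearMap.BilinForm ℝ V := B.compr₂ (innerₗ W e)
  have hnorm (x : V) : ‖B x x‖ = |b x x| := by
    rw [hrep (B x x), norm_smul, he, mul_one, Real.norm_eq_abs]
    rfl
  obtain ⟨ε, hε, hb⟩ := LinearMap.BilinForm.exists_eq_smul_innerₗ_of_sq_apply_self
    (b := b) (fun u v ↦ by simp [b, hsymm u v]) (fun x ↦ by rw [← sq_abs, ← hnorm, hB])
  have hform (u v : V) : B u v = (ε * c * ⟪u, v⟫) • e := by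
    rw [hrep (B u v)]
    congr 1
    simpa [b] using congr($hb u v)
  refine ⟨⟨e, ε, he, hε, hform⟩, fun u v hu hv huv ↦ ?_⟩
  have hε2 : ε ^ 2 = 1 := by rcases hε with rfl | rfl <;> norm_num
  simp only [hform, huv, real_inner_self_eq_norm_sq, hu, hv, he, norm_smul, Real.norm_eq_abs,
    mul_pow, sq_abs, mul_zero, abs_zero]
  linear_combination c ^ 2 * hε2

theorem stmt_4 {V W : Type*} [NormedAddCommGroup V] [InnerProductSpace ℝ V]
    [NormedAddCommGroup W] [InnerProductSpace ℝ W]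
    (hV : 2 ≤ Module.finrank ℝ V) (hW : Module.finrank ℝ W = 1)
    (B : V →ₗ[ℝ] V →ₗ[ℝ] W) (hsymm : ∀ u v : V, B u v = B v u)
    (c : ℝ) (hc : 0 ≤ c) (hB : ∀ u : V, ‖B u u‖ = c * ‖u‖ ^ 2) :
    (∃ (e : W) (ε : ℝ), ‖e‖ = 1 ∧ (ε = 1 ∨ ε = -1) ∧
      ∀ u v : V, B u v = (ε * c * ⟪u, v⟫) • e) ∧
    ∀ u v : V, ‖u‖ = 1 → ‖v‖ = 1 → ⟪u, v⟫ = 0 →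
      ⟪B u u, B v v⟫ - ‖B u v‖ ^ 2 = c ^ 2 :=
  stmt_4_general hW B hsymm c hB
end
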